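/- arXiv:1612.09088 — 5 statements merged into one kernel-verified Lean document; each statement's English description precedes it below -/
import Mathlib

section
/- The generating function of the major index over the symmetric group S_n equals the q-factorial: ∑_{σ∈S_n} q^{maj(σ)} = ∏_{k=1}^{n} (1+q+...+q^{k-1}). -/
open Finset Polynomial

/-- Descent positions of the word `w` restricted to length `n`. -/
def desSet (w : ℕ → ℕ) (n : ℕ) : Finset ℕ :=
  (Finset.range n).filter (fun i => i + 1 < n ∧ w (i + 1) < w i)

/-- Major index of the word `w` of length `n`. -/
def majW (w : ℕ → ℕ) (n : ℕ) : ℕ := ∑ i ∈ desSet w n, (i + 1)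

/-- number of descents at position ≥ j -/
def dcnt (D : Finset ℕ) (j : ℕ) : ℕ := (D.filter (fun i => j ≤ i)).card

/-- maj increment when inserting a maximal letter at slot `j`. -/
def fIns (D : Finset ℕ) (n j : ℕ) : ℕ :=
  if 1 ≤ j ∧ j - 1 ∈ D then 1 + dcnt D j
  else if j < n then j + 1 + dcnt D j
  else 0

/-- The word obtained from `w` by inserting letter `x` at slot `j`. -/
def wins (w : ℕ → ℕ) (x j : ℕ) : ℕ → ℕ := fun i =>
  if i < j then w i else if i = j then x else w (i - 1)

lemma majW_eq_sum (w : ℕ → ℕ) (n : ℕ) :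
    majW w n = ∑ i ∈ Finset.range n, (if i + 1 < n ∧ w (i + 1) < w i then i + 1 else 0) := by
  rw [majW, desSet, Finset.sum_filter]

lemma dcnt_desSet (w : ℕ → ℕ) (n j : ℕ) (hj : j ≤ n) :
    dcnt (desSet w n) j
      = ∑ i ∈ Finset.range (n - j), (if j + i + 1 < n ∧ w (j + i + 1) < w (j + i) then 1 else 0) := by
  rw [dcnt, desSet, Finset.filter_filter, Finset.card_filter]
  conv_lhs => rw [Finset.range_eq_Ico, ← Finset.sum_Ico_consecutive _ (Nat.zero_le j) hj,
    Finset.sum_Ico_eq_sum_range, Finset.sum_Ico_eq_sum_range]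
  have h1 : ∑ i ∈ Finset.range (j - 0), (if ((0 + i) + 1 < n ∧ w ((0 + i) + 1) < w (0 + i)) ∧ j ≤ 0 + i then 1 else 0) = 0 := by
    apply Finset.sum_eq_zero
    intro i hi
    simp only [Finset.mem_range] at hi
    exact if_neg (fun h => absurd h.2 (by omega))
  rw [h1, zero_add]
  apply Finset.sum_congr rfl
  intro i hi
  have : j ≤ j + i := Nat.le_add_right _ _
  simp only [this, and_true]

lemma majW_wins (w : ℕ → ℕ) (n x j : ℕ) (hx : ∀ i, i < n → w i < x) (hj : j ≤ n) :
    majW (wins w x j) (n + 1) = majW w n + fIns (desSet w n) n j := by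
  classical
  set v := wins w x j with hv
  -- abbreviations
  set g : ℕ → ℕ := fun i => if i + 1 < n ∧ w (i + 1) < w i then i + 1 else 0 with hg
  set g' : ℕ → ℕ := fun i => if i + 1 < n + 1 ∧ v (i + 1) < v i then i + 1 else 0 with hg'
  have hL : majW v (n + 1) = ∑ i ∈ Finset.range (n + 1), g' i := majW_eq_sum v (n + 1)
  have hR : majW w n = ∑ i ∈ Finset.range n, g i := majW_eq_sum w n
  -- split LHS
  have A : ∑ i ∈ Finset.range (n + 1), g' i
      = ∑ i ∈ Finset.range j, g' i + ∑ i ∈ Finset.range (n + 1 - j), g' (j + i) := by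
    have := Finset.sum_range_add g' j (n + 1 - j)
    rwa [show j + (n + 1 - j) = n + 1 by omega] at this
  have F : ∑ i ∈ Finset.range n, g i
      = ∑ i ∈ Finset.range j, g i + ∑ i ∈ Finset.range (n - j), g (j + i) := by
    have := Finset.sum_range_add g j (n - j)
    rwa [show j + (n - j) = n by omega] at this
  -- top part of LHS
  have C : ∑ i ∈ Finset.range (n + 1 - j), g' (j + i)
      = ∑ i ∈ Finset.range (n - j), g' (j + (i + 1)) + g' j := by
    rw [show n + 1 - j = (n - j) + 1 by omega, Finset.sum_range_succ']
    simp
  -- value of g' at j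
  have D : g' j = if j < n then j + 1 else 0 := by
    have e1 : v j = x := by
      simp [hv, wins]
    have e2 : v (j + 1) = w j := by
      simp only [hv, wins]
      rw [if_neg (by omega), if_neg (by omega)]
      congr 1
    simp only [hg', e1, e2]
    by_cases hjn : j < n
    · have := hx j hjn
      rw [if_pos ⟨by omega, this⟩, if_pos hjn]
    · rw [if_neg (fun h => hjn (by omega)), if_neg hjn]
  -- shifted terms
  have E : ∀ i, g' (j + (i + 1)) = g (j + i) + (if j + i + 1 < n ∧ w (j + i + 1) < w (j + i) then 1 else 0) := by
    intro i
    have e1 : v (j + (i + 1)) = w (j + i) := by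
      simp only [hv, wins]
      rw [if_neg (by omega), if_neg (by omega)]
      congr 1
      all_goals omega
    have e2 : v (j + (i + 1) + 1) = w (j + i + 1) := by
      simp only [hv, wins]
      rw [if_neg (by omega), if_neg (by omega)]
      congr 1
      all_goals omega
    simp only [hg', hg, e1, e2]
    split_ifs <;> omega
  have E' : ∑ i ∈ Finset.range (n - j), g' (j + (i + 1))
      = ∑ i ∈ Finset.range (n - j), g (j + i)
        + ∑ i ∈ Finset.range (n - j), (if j + i + 1 < n ∧ w (j + i + 1) < w (j + i) then 1 else 0) := by
    rw [← Finset.sum_add_distrib]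
    exact Finset.sum_congr rfl fun i _ => E i
  -- prefix comparison
  have B : ∑ i ∈ Finset.range j, g' i
        + (if 1 ≤ j ∧ j - 1 ∈ desSet w n then j else 0)
      = ∑ i ∈ Finset.range j, g i := by
    rcases Nat.eq_zero_or_pos j with hj0 | hj1
    · subst hj0
      simp
    · obtain ⟨m, rfl⟩ : ∃ m, j = m + 1 := ⟨j - 1, by omega⟩
      rw [Finset.sum_range_succ, Finset.sum_range_succ]
      have hpre : ∑ i ∈ Finset.range m, g' i = ∑ i ∈ Finset.range m, g i := by
        apply Finset.sum_congr rfl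
        intro i hi
        simp only [Finset.mem_range] at hi
        have e1 : v i = w i := by
          simp only [hv, wins]; rw [if_pos (by omega)]
        have e2 : v (i + 1) = w (i + 1) := by
          simp only [hv, wins]; rw [if_pos (by omega)]
        simp only [hg', hg, e1, e2]
        split_ifs <;> omega
      have hgm : g' m = 0 := by
        have e1 : v m = w m := by
          simp only [hv, wins]; rw [if_pos (by omega)]
        have e2 : v (m + 1) = x := by
          simp [hv, wins]
        have hwm : w m < x := hx m (by omega)
        simp only [hg', e1, e2]
        rw [if_neg (fun h => absurd h.2 (by omega))]
      have hmem : (1 ≤ m + 1 ∧ (m + 1) - 1 ∈ desSet w n) ↔ (m + 1 < n ∧ w (m + 1) < w m) := by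
        simp only [desSet, Finset.mem_filter, Finset.mem_range]
        constructor
        · rintro ⟨-, -, h⟩; exact h
        · rintro ⟨h1, h2⟩; exact ⟨by omega, ⟨by omega, h1, h2⟩⟩
      have hgval : g m = if m + 1 < n ∧ w (m + 1) < w m then m + 1 else 0 := rfl
      rw [hpre, hgm, hgval]
      by_cases hc : m + 1 < n ∧ w (m + 1) < w m
      · rw [if_pos (hmem.2 hc), if_pos hc]
        all_goals omega
      · rw [if_neg (fun h => hc (hmem.1 h)), if_neg hc]
        all_goals omega
  -- counting
  have G := dcnt_desSet w n j hj
  -- membership implies bound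
  have hmn : j - 1 ∈ desSet w n → j - 1 + 1 < n := by
    intro h
    exact (Finset.mem_filter.1 h).2.1
  -- assemble
  rw [hL, hR] at *
  rw [A, C, E', D]
  rw [F]
  unfold fIns
  rw [← G]
  by_cases hmem : j - 1 ∈ desSet w n
  · have h1 : j - 1 + 1 < n := hmn hmem
    simp only [hmem, and_true] at B ⊢
    by_cases h0 : 1 ≤ j
    · have hjn : j < n := by omega
      rw [if_pos h0] at B
      rw [if_pos h0, if_pos hjn]
      omega
    · rw [if_neg h0] at B
      rw [if_neg h0, if_pos (show j < n by omega), if_pos (show j < n by omega)]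
      omega
  · simp only [hmem, and_false, if_false] at B ⊢
    rcases Nat.lt_or_ge j n with hjn | hjn
    · rw [if_pos hjn, if_pos hjn]
      omega
    · have hdz : dcnt (desSet w n) j = 0 := by
        rw [G, show n - j = 0 by omega]
        simp
      rw [if_neg (show ¬ j < n by omega), if_neg (show ¬ j < n by omega)]
      omega

section dlem
variable {D : Finset ℕ} {n j j' : ℕ}

lemma dcnt_anti (h : j ≤ j') : dcnt D j' ≤ dcnt D j := by
  apply Finset.card_le_card
  intro i hi
  simp only [Finset.mem_filter] at hi ⊢
  exact ⟨hi.1, by omega⟩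

lemma dcnt_le_add (h : j ≤ j') : dcnt D j ≤ dcnt D j' + (j' - j) := by
  have hsub : D.filter (fun i => j ≤ i) ⊆ (D.filter (fun i => j' ≤ i)) ∪ Finset.Ico j j' := by
    intro i hi
    simp only [Finset.mem_filter, Finset.mem_union, Finset.mem_Ico] at hi ⊢
    rcases Nat.lt_or_ge i j' with h1 | h1
    · exact Or.inr ⟨hi.2, h1⟩
    · exact Or.inl ⟨hi.1, h1⟩
  calc (D.filter (fun i => j ≤ i)).card ≤ _ := Finset.card_le_card hsub
    _ ≤ (D.filter (fun i => j' ≤ i)).card + (Finset.Ico j j').card := Finset.card_union_le _ _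
    _ = dcnt D j' + (j' - j) := by rw [Nat.card_Ico]; rfl

lemma dcnt_lt (h : j < j') (hm : j' - 1 ∈ D) : dcnt D j' + 1 ≤ dcnt D j := by
  have hsub : insert (j' - 1) (D.filter (fun i => j' ≤ i)) ⊆ D.filter (fun i => j ≤ i) := by
    intro i hi
    simp only [Finset.mem_insert, Finset.mem_filter] at hi ⊢
    rcases hi with rfl | ⟨h1, h2⟩
    · exact ⟨hm, by omega⟩
    · exact ⟨h1, by omega⟩
  have hnm : (j' - 1) ∉ D.filter (fun i => j' ≤ i) := by
    simp only [Finset.mem_filter]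
    rintro ⟨-, h2⟩
    omega
  have := Finset.card_le_card hsub
  rw [Finset.card_insert_of_notMem hnm] at this
  unfold dcnt
  omega

lemma dcnt_le_add' (h : j < j') (hm : j' - 1 ∉ D) : dcnt D j ≤ dcnt D j' + (j' - 1 - j) := by
  have hsub : D.filter (fun i => j ≤ i) ⊆ (D.filter (fun i => j' ≤ i)) ∪ Finset.Ico j (j' - 1) := by
    intro i hi
    simp only [Finset.mem_filter, Finset.mem_union, Finset.mem_Ico] at hi ⊢
    rcases Nat.lt_or_ge i j' with h1 | h1
    · refine Or.inr ⟨hi.2, ?_⟩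
      rcases Nat.lt_or_ge i (j' - 1) with h2 | h2
      · exact h2
      · exfalso; have : i = j' - 1 := by omega
        exact hm (this ▸ hi.1)
    · exact Or.inl ⟨hi.1, h1⟩
  calc (D.filter (fun i => j ≤ i)).card ≤ _ := Finset.card_le_card hsub
    _ ≤ (D.filter (fun i => j' ≤ i)).card + (Finset.Ico j (j' - 1)).card := Finset.card_union_le _ _
    _ = dcnt D j' + (j' - 1 - j) := by rw [Nat.card_Ico]; rfl

lemma dcnt_bound (hD : ∀ i ∈ D, i + 1 < n) : dcnt D j ≤ n - 1 - j := by
  have hsub : D.filter (fun i => j ≤ i) ⊆ Finset.Ico j (n - 1) := by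
    intro i hi
    simp only [Finset.mem_filter, Finset.mem_Ico] at hi ⊢
    have := hD i hi.1
    omega
  calc (D.filter (fun i => j ≤ i)).card ≤ _ := Finset.card_le_card hsub
    _ = n - 1 - j := Nat.card_Ico _ _

end dlem

lemma fIns_le (D : Finset ℕ) (n j : ℕ) (hD : ∀ i ∈ D, i + 1 < n) : fIns D n j ≤ n := by
  unfold fIns
  have h1 := dcnt_bound (D := D) (j := j) hD
  by_cases hm : j - 1 ∈ D
  · have := hD _ hm
    simp only [hm, and_true]
    split_ifs <;> omega
  · simp only [hm, and_false, if_false]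
    split_ifs <;> omega

lemma fIns_ne (D : Finset ℕ) (n : ℕ) (hD : ∀ i ∈ D, i + 1 < n) {j j' : ℕ}
    (hj : j < n + 1) (hj' : j' < n + 1) (hlt : j < j') : fIns D n j ≠ fIns D n j' := by
  have hl1 : dcnt D j' ≤ dcnt D j := dcnt_anti (le_of_lt hlt)
  have hl2 : dcnt D j ≤ dcnt D j' + (j' - j) := dcnt_le_add (le_of_lt hlt)
  unfold fIns
  by_cases m2 : j' - 1 ∈ D
  · have hl4 : dcnt D j' + 1 ≤ dcnt D j := dcnt_lt hlt m2
    have hb2 := hD _ m2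
    by_cases m1 : j - 1 ∈ D
    · have hb1 := hD _ m1
      simp only [m1, m2, and_true]
      split_ifs <;> omega
    · simp only [m1, m2, and_true, and_false, if_false]
      split_ifs <;> omega
  · have hl5 : dcnt D j ≤ dcnt D j' + (j' - 1 - j) := dcnt_le_add' hlt m2
    by_cases m1 : j - 1 ∈ D
    · have hb1 := hD _ m1
      simp only [m1, m2, and_true, and_false, if_false]
      split_ifs <;> omega
    · simp only [m1, m2, and_false, if_false]
      split_ifs <;> omega

lemma sum_pow_fIns (D : Finset ℕ) (n : ℕ) (hD : ∀ i ∈ D, i + 1 < n) :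
    ∑ j ∈ Finset.range (n + 1), (Polynomial.X : Polynomial ℤ) ^ fIns D n j
      = ∑ i ∈ Finset.range (n + 1), (Polynomial.X : Polynomial ℤ) ^ i := by
  have hinj : ∀ x ∈ Finset.range (n + 1), ∀ y ∈ Finset.range (n + 1),
      fIns D n x = fIns D n y → x = y := by
    intro a ha b hb hab
    simp only [Finset.mem_range] at ha hb
    rcases lt_trichotomy a b with h | h | h
    · exact absurd hab (fIns_ne D n hD ha hb h)
    · exact h
    · exact absurd hab.symm (fIns_ne D n hD hb ha h)
  have himg : (Finset.range (n + 1)).image (fIns D n) = Finset.range (n + 1) := by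
    apply Finset.eq_of_subset_of_card_le
    · intro m hm
      simp only [Finset.mem_image, Finset.mem_range] at hm ⊢
      obtain ⟨j, hj, rfl⟩ := hm
      have := fIns_le D n j hD
      omega
    · rw [Finset.card_image_of_injOn (fun x hx y hy => hinj x hx y hy)]
  conv_rhs => rw [← himg]
  rw [Finset.sum_image hinj]



def descents (n : ℕ) (σ : Equiv.Perm (Fin n)) : Finset (Fin (n - 1)) :=
  Finset.univ.filter fun i =>
    σ ⟨i.1 + 1, by have := i.isLt; omega⟩ < σ ⟨i.1, by have := i.isLt; omega⟩

def desStat (n : ℕ) (σ : Equiv.Perm (Fin n)) : ℕ := (descents n σ).card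

def majStat (n : ℕ) (σ : Equiv.Perm (Fin n)) : ℕ := ∑ i ∈ descents n σ, (i.1 + 1)

def invStat (n : ℕ) (σ : Equiv.Perm (Fin n)) : ℕ :=
  (Finset.univ.filter fun p : Fin n × Fin n => p.1 < p.2 ∧ σ p.2 < σ p.1).card

def fixStat (n : ℕ) (σ : Equiv.Perm (Fin n)) : ℕ :=
  (Finset.univ.filter fun i : Fin n => σ i = i).card

/-- the one-line word of a permutation, extended by `0`. -/
def wordOf (n : ℕ) (σ : Equiv.Perm (Fin n)) : ℕ → ℕ := fun i =>
  if h : i < n then (σ ⟨i, h⟩ : ℕ) else 0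

lemma wordOf_lt (n : ℕ) (σ : Equiv.Perm (Fin n)) : ∀ i, i < n → wordOf n σ i < n := by
  intro i hi
  simp only [wordOf, dif_pos hi]
  exact (σ ⟨i, hi⟩).isLt

lemma majStat_eq_majW (n : ℕ) (σ : Equiv.Perm (Fin n)) :
    majStat n σ = majW (wordOf n σ) n := by
  rw [majStat, descents, Finset.sum_filter, majW_eq_sum]
  rw [show (Finset.univ : Finset (Fin (n - 1))) = Finset.univ from rfl]
  have key : ∀ i : Fin (n - 1),
      (if σ ⟨i.1 + 1, by have := i.isLt; omega⟩ < σ ⟨i.1, by have := i.isLt; omega⟩ then i.1 + 1 else 0)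
        = (fun k => if k + 1 < n ∧ wordOf n σ (k + 1) < wordOf n σ k then k + 1 else 0) i.1 := by
    intro i
    have hi := i.isLt
    have h1 : i.1 < n := by omega
    have h2 : i.1 + 1 < n := by omega
    simp only [wordOf, h1, h2, dite_true, true_and]
    by_cases h : ((σ ⟨i.1 + 1, h2⟩ : Fin n) : ℕ) < ((σ ⟨i.1, h1⟩ : Fin n) : ℕ)
    · rw [if_pos (Fin.lt_def.2 h), if_pos h]
    · rw [if_neg (fun hh => h (Fin.lt_def.1 hh)), if_neg h]
  rw [Finset.sum_congr rfl (fun i _ => key i)]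
  rw [Fin.sum_univ_eq_sum_range (fun k => if k + 1 < n ∧ wordOf n σ (k + 1) < wordOf n σ k then k + 1 else 0) (n - 1)]
  apply Finset.sum_subset
  · exact Finset.range_subset_range.2 (by omega)
  · intro i _ hni
    simp only [Finset.mem_range] at hni
    exact if_neg (fun h => by omega)

/-- insertion of the maximal letter `n` at slot `j` in the word of `σ`. -/
def insFun (n : ℕ) (σ : Equiv.Perm (Fin n)) (j : Fin (n + 1)) (i : Fin (n + 1)) : Fin (n + 1) :=
  if h : i.1 < j.1 then (σ ⟨i.1, by have := j.2; omega⟩).castSucc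
  else if h2 : i.1 = j.1 then Fin.last n
  else (σ ⟨i.1 - 1, by have := i.2; omega⟩).castSucc

lemma insFun_inj (n : ℕ) (σ : Equiv.Perm (Fin n)) (j : Fin (n + 1)) :
    Function.Injective (insFun n σ j) := by
  intro a b hab
  unfold insFun at hab
  have hcs : ∀ (x y : Fin n), x.castSucc = y.castSucc → x = y :=
    fun x y h => Fin.castSucc_injective n h
  have hlast : ∀ x : Fin n, x.castSucc ≠ Fin.last n := fun x h => by
    have := congrArg Fin.val h
    simp at this
    omega
  apply Fin.ext
  split_ifs at hab with h1 h2 h3 h4 h5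
  · have := σ.injective (hcs _ _ hab)
    have := congrArg Fin.val this
    simpa using this
  · exact absurd hab (hlast _)
  · have := σ.injective (hcs _ _ hab)
    have := congrArg Fin.val this
    simp at this
    omega
  · exact absurd hab.symm (hlast _)
  · omega
  · exact absurd hab.symm (by simpa using (hlast _))
  · have := σ.injective (hcs _ _ hab)
    have := congrArg Fin.val this
    simp at this
    omega
  · exact absurd hab (hlast _)
  · have := σ.injective (hcs _ _ hab)
    have := congrArg Fin.val this
    simp at this
    omega

noncomputable def insPerm (n : ℕ) (σ : Equiv.Perm (Fin n)) (j : Fin (n + 1)) : Equiv.Perm (Fin (n + 1)) :=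
  Equiv.ofBijective (insFun n σ j) (Finite.injective_iff_bijective.1 (insFun_inj n σ j))

lemma insPerm_apply (n : ℕ) (σ : Equiv.Perm (Fin n)) (j : Fin (n + 1)) (i : Fin (n + 1)) :
    insPerm n σ j i = insFun n σ j i := rfl

lemma wordOf_insPerm (n : ℕ) (σ : Equiv.Perm (Fin n)) (j : Fin (n + 1)) :
    wordOf (n + 1) (insPerm n σ j) = wins (wordOf n σ) n j.1 := by
  funext i
  simp only [wordOf, wins]
  by_cases hi : i < n + 1
  · rw [dif_pos hi, insPerm_apply]
    unfold insFun
    simp only [show ((⟨i, hi⟩ : Fin (n + 1)) : ℕ) = i from rfl]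
    rcases lt_trichotomy i j.1 with h | h | h
    · rw [dif_pos h, if_pos h]
      have hin : i < n := by have := j.2; omega
      rw [dif_pos hin]
      simp
    · rw [dif_neg (by omega), dif_pos h, if_neg (by omega), if_pos h]
      simp
    · rw [dif_neg (by omega), dif_neg (by omega), if_neg (by omega), if_neg (by omega)]
      have : i - 1 < n := by omega
      rw [dif_pos this]
      simp
  · rw [dif_neg hi, if_neg (by have := j.2; omega), if_neg (by have := j.2; omega)]
    rw [dif_neg (by omega)]

lemma insPerm_inj (n : ℕ) :
    Function.Injective (fun p : Equiv.Perm (Fin n) × Fin (n + 1) => insPerm n p.1 p.2) := by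
  rintro ⟨σ, j⟩ ⟨σ', j'⟩ h
  simp only at h
  have happ : ∀ i, insFun n σ j i = insFun n σ' j' i := by
    intro i
    have := congrArg (fun e : Equiv.Perm (Fin (n + 1)) => e i) h
    simpa [insPerm_apply] using this
  have hj : j = j' := by
    by_contra hne
    have h1 := happ j
    have e1 : insFun n σ j j = Fin.last n := by
      unfold insFun
      rw [dif_neg (lt_irrefl _), dif_pos rfl]
    rw [e1] at h1
    unfold insFun at h1
    split_ifs at h1 with a b
    · exact absurd h1.symm (Fin.castSucc_lt_last _).ne
    · exact hne (Fin.ext b)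
    · exact absurd h1.symm (Fin.castSucc_lt_last _).ne
  subst hj
  have hσ : σ = σ' := by
    apply Equiv.ext
    intro i
    by_cases hij : i.1 < j.1
    · have h1 := happ i.castSucc
      unfold insFun at h1
      rw [dif_pos (by simpa using hij), dif_pos (by simpa using hij)] at h1
      have h2 := Fin.castSucc_injective n h1
      simpa [Fin.eta] using h2
    · have h1 := happ i.succ
      unfold insFun at h1
      have hc1 : ¬ ((i.succ : Fin (n + 1)).1 < j.1) := by
        simp only [Fin.val_succ]
        omega
      have hc2 : ¬ ((i.succ : Fin (n + 1)).1 = j.1) := by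
        simp only [Fin.val_succ]
        omega
      rw [dif_neg hc1, dif_neg hc1, dif_neg hc2, dif_neg hc2] at h1
      have h2 := Fin.castSucc_injective n h1
      have h3 : (⟨(i.succ : Fin (n + 1)).1 - 1, by have := i.2; simp [Fin.val_succ]⟩ : Fin n) = i := by
        apply Fin.ext
        simp [Fin.val_succ]
      rwa [h3] at h2
  rw [hσ]

theorem maj_generating_function (n : ℕ) :
    ∑ σ : Equiv.Perm (Fin n), (Polynomial.X : Polynomial ℤ) ^ majStat n σ =
      ∏ k ∈ Finset.range n, ∑ i ∈ Finset.range (k + 1), (Polynomial.X : Polynomial ℤ) ^ i := by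
  induction n with
  | zero =>
    have h0 : ∀ σ : Equiv.Perm (Fin 0), majStat 0 σ = 0 := by
      intro σ
      rw [majStat]
      apply Finset.sum_eq_zero
      intro i _
      exact i.elim0
    simp [h0]
  | succ n ih =>
    have hbij : Function.Bijective (fun p : Equiv.Perm (Fin n) × Fin (n + 1) => insPerm n p.1 p.2) := by
      rw [Fintype.bijective_iff_injective_and_card]
      refine ⟨insPerm_inj n, ?_⟩
      rw [Fintype.card_prod, Fintype.card_perm, Fintype.card_perm, Fintype.card_fin,
        Fintype.card_fin, Nat.factorial_succ, mul_comm]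
    rw [← Fintype.sum_bijective _ hbij
      (fun p => (Polynomial.X : Polynomial ℤ) ^ majStat (n + 1) (insPerm n p.1 p.2))
      (fun τ => (Polynomial.X : Polynomial ℤ) ^ majStat (n + 1) τ) (fun p => rfl)]
    rw [Fintype.sum_prod_type]
    have hmaj : ∀ (σ : Equiv.Perm (Fin n)) (j : Fin (n + 1)),
        majStat (n + 1) (insPerm n σ j) = majStat n σ + fIns (desSet (wordOf n σ) n) n j.1 := by
      intro σ j
      rw [majStat_eq_majW, wordOf_insPerm,
        majW_wins _ _ _ _ (wordOf_lt n σ) (by have := j.2; omega), majStat_eq_majW]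
    calc ∑ σ : Equiv.Perm (Fin n), ∑ j : Fin (n + 1),
            (Polynomial.X : Polynomial ℤ) ^ majStat (n + 1) (insPerm n σ j)
        = ∑ σ : Equiv.Perm (Fin n), (Polynomial.X : Polynomial ℤ) ^ majStat n σ
            * ∑ i ∈ Finset.range (n + 1), (Polynomial.X : Polynomial ℤ) ^ i := by
          apply Finset.sum_congr rfl
          intro σ _
          have hterm : ∀ j : Fin (n + 1), (Polynomial.X : Polynomial ℤ) ^ majStat (n + 1) (insPerm n σ j)
              = (Polynomial.X : Polynomial ℤ) ^ majStat n σ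
                * (Polynomial.X : Polynomial ℤ) ^ fIns (desSet (wordOf n σ) n) n j.1 := by
            intro j
            rw [hmaj, pow_add]
          rw [Finset.sum_congr rfl (fun j _ => hterm j), ← Finset.mul_sum]
          congr 1
          rw [Fin.sum_univ_eq_sum_range
            (fun k => (Polynomial.X : Polynomial ℤ) ^ fIns (desSet (wordOf n σ) n) n k) (n + 1)]
          exact sum_pow_fIns _ _ (fun i hi => (Finset.mem_filter.1 hi).2.1)
      _ = (∑ σ : Equiv.Perm (Fin n), (Polynomial.X : Polynomial ℤ) ^ majStat n σ)
            * ∑ i ∈ Finset.range (n + 1), (Polynomial.X : Polynomial ℤ) ^ i := by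
          rw [← Finset.sum_mul]
      _ = _ := by rw [ih, ← Finset.prod_range_succ]
end

section
/- The statistics maj and inv are equidistributed on S_n: ∑_{σ∈S_n} q^{maj(σ)} = ∑_{σ∈S_n} q^{inv(σ)} in ℤ[q]. -/
open Finset Equiv

section MajInv

variable {n : ℕ}

def ins (k : Fin (n+1)) (e : Equiv.Perm (Fin n)) : Equiv.Perm (Fin (n+1)) :=
  (finSuccEquiv' k).trans ((Equiv.optionCongr e).trans (finSuccEquiv' (Fin.last n)).symm)

lemma ins_self (k : Fin (n+1)) (e : Equiv.Perm (Fin n)) : ins k e k = Fin.last n := by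
  simp [ins, finSuccEquiv'_at, finSuccEquiv'_symm_none]

lemma ins_succAbove (k : Fin (n+1)) (e : Equiv.Perm (Fin n)) (i : Fin n) :
    ins k e (k.succAbove i) = (e i).castSucc := by
  simp [ins, finSuccEquiv'_succAbove, finSuccEquiv'_symm_some, Fin.succAbove_last]

lemma ins_lt (k : Fin (n+1)) (e : Equiv.Perm (Fin n)) (p : Fin (n+1)) (hp : p.1 < k.1) :
    ins k e p = (e ⟨p.1, by omega⟩).castSucc := by
  have h : p = k.succAbove ⟨p.1, by omega⟩ := by
    rw [Fin.succAbove_of_castSucc_lt]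
    · rfl
    · exact hp
  conv_lhs => rw [h]
  exact ins_succAbove k e ⟨p.1, by omega⟩

lemma ins_gt (k : Fin (n+1)) (e : Equiv.Perm (Fin n)) (p : Fin (n+1)) (hp : k.1 < p.1) :
    ins k e p = (e ⟨p.1 - 1, by omega⟩).castSucc := by
  have h : p = k.succAbove ⟨p.1 - 1, by omega⟩ := by
    rw [Fin.succAbove_of_le_castSucc]
    · ext; simp; omega
    · rw [Fin.le_castSucc_iff]; simp [Fin.lt_def]; omega
  conv_lhs => rw [h]
  exact ins_succAbove k e ⟨p.1 - 1, by omega⟩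

lemma ins_injective : Function.Injective
    (fun p : Fin (n+1) × Equiv.Perm (Fin n) => ins p.1 p.2) := by
  rintro ⟨k, e⟩ ⟨k', e'⟩ h
  simp only at h
  have hk : k = k' := by
    by_contra hne
    have h1 : ins k e k = Fin.last n := ins_self k e
    have h2 : ins k' e' k ≠ Fin.last n := by
      rcases lt_or_gt_of_ne (fun hh : k = k' => hne hh) with hlt | hgt
      · rw [ins_lt k' e' k hlt]; exact Fin.ne_of_lt (Fin.castSucc_lt_last _)
      · rw [ins_gt k' e' k hgt]; exact Fin.ne_of_lt (Fin.castSucc_lt_last _)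
    rw [h] at h1; exact h2 h1
  subst hk
  have he : e = e' := by
    ext i
    have h3 : ins k e (k.succAbove i) = ins k e' (k.succAbove i) := by rw [h]
    rw [ins_succAbove, ins_succAbove] at h3
    exact congrArg Fin.val (Fin.castSucc_injective _ h3)
  simp [he]

lemma ins_bijective : Function.Bijective
    (fun p : Fin (n+1) × Equiv.Perm (Fin n) => ins p.1 p.2) := by
  rw [Fintype.bijective_iff_injective_and_card]
  refine ⟨ins_injective, ?_⟩
  simp [Fintype.card_perm, Nat.factorial_succ]

lemma ins_ne_last (k : Fin (n+1)) (e : Equiv.Perm (Fin n)) (p : Fin (n+1)) (hp : p ≠ k) :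
    ins k e p < Fin.last n := by
  obtain ⟨i, rfl⟩ := Fin.exists_succAbove_eq hp
  rw [ins_succAbove]
  exact Fin.castSucc_lt_last _

lemma invStat_ins (k : Fin (n+1)) (e : Equiv.Perm (Fin n)) :
    invStat (n+1) (ins k e) = (n - k.1) + invStat n e := by
  unfold invStat
  set σ := ins k e with hσ
  set P : Fin (n+1) × Fin (n+1) → Prop := fun p => p.1 < p.2 ∧ σ p.2 < σ p.1 with hP
  show (Finset.univ.filter P).card = (n - k.1) + _
  have hsplit := Finset.card_filter_add_card_filter_not
    (s := Finset.univ.filter P) (p := fun p => p.1 = k)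
  rw [Finset.filter_filter, Finset.filter_filter] at hsplit
  have h1 : (Finset.univ.filter fun p : Fin (n+1) × Fin (n+1) => P p ∧ p.1 = k).card
      = n - k.1 := by
    have himg : (Finset.univ.filter fun p : Fin (n+1) × Fin (n+1) => P p ∧ p.1 = k)
        = (Finset.Ioi k).image (fun q => (k, q)) := by
      ext ⟨p1, p2⟩
      simp only [Finset.mem_filter, Finset.mem_univ, true_and, Finset.mem_image,
        Finset.mem_Ioi, hP]
      constructor
      · rintro ⟨⟨hlt, -⟩, rfl⟩
        exact ⟨p2, hlt, rfl⟩
      · rintro ⟨q, hq, heq⟩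
        injection heq with hk1 hk2
        subst hk1; subst hk2
        refine ⟨⟨hq, ?_⟩, rfl⟩
        rw [ins_self]
        exact ins_ne_last k e _ (Fin.ne_of_gt hq)
    rw [himg, Finset.card_image_of_injective _ (fun a b hab => (Prod.mk.injEq .. ▸ hab).2),
      Fin.card_Ioi]
    omega
  have h2 : (Finset.univ.filter fun p : Fin (n+1) × Fin (n+1) => P p ∧ ¬ p.1 = k).card
      = (Finset.univ.filter fun p : Fin n × Fin n => p.1 < p.2 ∧ e p.2 < e p.1).card := by
    refine (Finset.card_bij (fun (p : Fin n × Fin n) _ => ((k.succAbove p.1, k.succAbove p.2) : Fin (n+1) × Fin (n+1))) ?_ ?_ ?_).symm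
    · rintro ⟨i, j⟩ hij
      simp only [Finset.mem_filter, Finset.mem_univ, true_and] at hij ⊢
      refine ⟨⟨?_, ?_⟩, Fin.succAbove_ne k i⟩
      · exact Fin.succAbove_lt_succAbove_iff.2 hij.1
      · rw [hσ, ins_succAbove, ins_succAbove]
        exact Fin.castSucc_lt_castSucc_iff.2 hij.2
    · intro a ha b hb hab
      have ha1 := congrArg Prod.fst hab
      have ha2 := congrArg Prod.snd hab
      simp only at ha1 ha2
      exact Prod.ext (Fin.succAbove_right_injective ha1) (Fin.succAbove_right_injective ha2)
    · rintro ⟨p1, p2⟩ hp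
      simp only [Finset.mem_filter, Finset.mem_univ, true_and, hP] at hp
      obtain ⟨⟨hlt, hval⟩, hne⟩ := hp
      have hp2 : p2 ≠ k := by
        intro hh
        rw [hσ, hh, ins_self] at hval
        exact absurd hval (not_lt.2 (le_of_lt (ins_ne_last k e p1 hne)))
      obtain ⟨i, rfl⟩ := Fin.exists_succAbove_eq hne
      obtain ⟨j, rfl⟩ := Fin.exists_succAbove_eq hp2
      refine ⟨(i, j), ?_, rfl⟩
      simp only [Finset.mem_filter, Finset.mem_univ, true_and]
      rw [hσ, ins_succAbove, ins_succAbove] at hval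
      exact ⟨Fin.succAbove_lt_succAbove_iff.1 hlt, Fin.castSucc_lt_castSucc_iff.1 hval⟩
  rw [h1, h2] at hsplit
  omega

def Ed (e : Equiv.Perm (Fin n)) (t : ℕ) : Prop :=
  if h : t + 1 < n then e ⟨t+1, h⟩ < e ⟨t, by omega⟩ else False

instance (e : Equiv.Perm (Fin n)) (t : ℕ) : Decidable (Ed e t) := by
  unfold Ed; infer_instance

lemma Ed_lt {e : Equiv.Perm (Fin n)} {t : ℕ} (h : Ed e t) : t + 1 < n := by
  by_contra hc
  rw [Ed, dif_neg hc] at h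
  exact h

lemma maj_eq (e : Equiv.Perm (Fin n)) :
    majStat n e = ∑ t ∈ Finset.range n, if Ed e t then t + 1 else 0 := by
  unfold majStat descents
  rw [Finset.sum_filter]
  have step1 : ∀ i : Fin (n-1),
      (if (e ⟨i.1 + 1, by have := i.isLt; omega⟩ < e ⟨i.1, by have := i.isLt; omega⟩)
        then (i.1+1) else 0) = (fun t => if Ed e t then t + 1 else 0) i.1 := by
    intro i
    have hi : i.1 + 1 < n := by have := i.isLt; omega
    simp only [Ed, dif_pos hi]
  rw [Finset.sum_congr rfl (fun i _ => step1 i),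
    Fin.sum_univ_eq_sum_range (fun t => if Ed e t then t + 1 else 0) (n-1)]
  rcases n with _ | m
  · simp
  · simp only [Nat.add_sub_cancel]
    rw [Finset.sum_range_succ]
    have : ¬ Ed e m := fun h => by have := Ed_lt h; omega
    simp [this]

lemma ins_descent_iff (k : Fin (n+1)) (e : Equiv.Perm (Fin n)) (j : ℕ) (hj : j < n) :
    ((ins k e) ⟨j+1, by omega⟩ < (ins k e) ⟨j, by omega⟩
      ↔ (j = k.1 ∨ (j + 1 < k.1 ∧ Ed e j) ∨ (k.1 < j ∧ Ed e (j-1)))) := by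
  have hk : k.1 ≤ n := by omega
  rcases Nat.lt_trichotomy j k.1 with hlt | heq | hgt
  · rcases Nat.lt_trichotomy (j+1) k.1 with hlt2 | heq2 | hgt2
    · -- j + 1 < k : both below
      rw [ins_lt k e _ hlt2, ins_lt k e _ hlt]
      rw [Fin.castSucc_lt_castSucc_iff]
      have hEd : Ed e j ↔ e ⟨j+1, by omega⟩ < e ⟨j, by omega⟩ := by
        rw [Ed, dif_pos (by omega : j + 1 < n)]
      constructor
      · intro h; exact Or.inr (Or.inl ⟨hlt2, hEd.2 h⟩)
      · rintro (h | ⟨-, h⟩ | ⟨h, -⟩)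
        · omega
        · exact hEd.1 h
        · omega
    · -- j + 1 = k : second value is last
      have hpos : (⟨j+1, by omega⟩ : Fin (n+1)) = k := Fin.ext heq2
      rw [hpos, ins_self, ins_lt k e _ hlt]
      constructor
      · intro h; exact absurd h (not_lt.2 (Fin.le_last _))
      · rintro (h | ⟨h, -⟩ | ⟨h, -⟩) <;> omega
    · omega
  · -- j = k
    have hpos : (⟨j, by omega⟩ : Fin (n+1)) = k := Fin.ext heq
    rw [hpos, ins_self, ins_gt k e ⟨j+1, by omega⟩ (show (k:ℕ) < j + 1 by omega)]
    simp only [Fin.castSucc_lt_last, true_iff]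
    exact Or.inl heq
  · -- k < j : both above
    rw [ins_gt k e ⟨j+1, by omega⟩ (show (k:ℕ) < j + 1 by omega), ins_gt k e ⟨j, by omega⟩ (show (k:ℕ) < j by omega)]
    rw [Fin.castSucc_lt_castSucc_iff]
    have hmk : (⟨j+1-1, by omega⟩ : Fin n) = ⟨(j-1)+1, by omega⟩ := by ext; simp; omega
    rw [hmk]
    have hEd : Ed e (j-1) ↔ e ⟨(j-1)+1, by omega⟩ < e ⟨j-1, by omega⟩ := by
      rw [Ed, dif_pos (by omega : (j-1) + 1 < n)]
    constructor
    · intro h; exact Or.inr (Or.inr ⟨hgt, hEd.2 h⟩)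
    · rintro (h | ⟨h, -⟩ | ⟨-, h⟩)
      · omega
      · omega
      · exact hEd.1 h

def cnt (e : Equiv.Perm (Fin n)) (K : ℕ) : ℕ :=
  ∑ t ∈ Finset.range n, if K ≤ t ∧ Ed e t then 1 else 0

lemma maj_ins (k : Fin (n+1)) (e : Equiv.Perm (Fin n)) :
    majStat (n+1) (ins k e) =
      (if k.1 < n then k.1 + 1 else 0)
      + (∑ t ∈ Finset.range n, if t + 1 < k.1 ∧ Ed e t then t + 1 else 0)
      + (∑ t ∈ Finset.range n, if k.1 ≤ t ∧ Ed e t then t + 2 else 0) := by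
  rw [maj_eq]
  rw [Finset.sum_range_succ]
  have hlast : ¬ Ed (ins k e) n := fun h => by have := Ed_lt h; omega
  rw [if_neg hlast, add_zero]
  have hpt : ∀ j ∈ Finset.range n, (if Ed (ins k e) j then j + 1 else 0)
      = (if j = k.1 then j + 1 else 0)
        + (if j + 1 < k.1 ∧ Ed e j then j + 1 else 0)
        + (if k.1 < j ∧ Ed e (j-1) then j + 1 else 0) := by
    intro j hj
    rw [Finset.mem_range] at hj
    have hD : Ed (ins k e) j ↔ (j = k.1 ∨ (j + 1 < k.1 ∧ Ed e j) ∨ (k.1 < j ∧ Ed e (j-1))) := by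
      rw [Ed, dif_pos (by omega : j + 1 < n + 1)]
      exact ins_descent_iff k e j hj
    rw [if_congr hD rfl rfl]
    by_cases h1 : Ed e j <;> by_cases h2 : Ed e (j-1) <;>
      simp only [h1, h2, and_true, and_false, iff_true, iff_false, or_false, false_or] <;>
      split_ifs <;> (try exact absurd ‹False› id) <;> omega
  rw [Finset.sum_congr rfl hpt, Finset.sum_add_distrib, Finset.sum_add_distrib]
  congr 1
  · congr 1
    rw [Finset.sum_ite_eq' (Finset.range n) k.1 (fun j => j + 1)]
    simp [Finset.mem_range]
  · -- reindex
    rcases n with _ | m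
    · simp
    · rw [Finset.sum_range_succ' _ m]
      have h0 : (if k.1 < 0 ∧ Ed e (0-1) then 0 + 1 else 0) = 0 := by simp
      rw [h0, add_zero]
      rw [Finset.sum_range_succ (fun t => if k.1 ≤ t ∧ Ed e t then t + 2 else 0) m]
      have hm : ¬ Ed e m := fun h => by have := Ed_lt h; omega
      simp only [hm, and_false, if_false, add_zero]
      apply Finset.sum_congr rfl
      intro i hi
      have : (k.1 < i + 1 ∧ Ed e (i + 1 - 1)) ↔ (k.1 ≤ i ∧ Ed e i) := by
        rw [Nat.add_sub_cancel, Nat.lt_succ_iff]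
      rw [if_congr this rfl rfl]

lemma maj_e_split (e : Equiv.Perm (Fin n)) (K : ℕ) :
    majStat n e = (∑ t ∈ Finset.range n, if t + 1 < K ∧ Ed e t then t + 1 else 0)
      + (if 1 ≤ K ∧ Ed e (K-1) then K else 0)
      + (∑ t ∈ Finset.range n, if K ≤ t ∧ Ed e t then t + 1 else 0) := by
  rw [maj_eq]
  have hmid : (if 1 ≤ K ∧ Ed e (K-1) then K else 0)
      = ∑ t ∈ Finset.range n, if t + 1 = K ∧ Ed e t then t + 1 else 0 := by
    by_cases hC : 1 ≤ K ∧ Ed e (K-1)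
    · have hKn : K - 1 < n := by have := Ed_lt hC.2; omega
      rw [if_pos hC]
      have : ∀ t ∈ Finset.range n, (if t + 1 = K ∧ Ed e t then t + 1 else 0)
          = if t = K - 1 then K else 0 := by
        intro t ht
        by_cases h : t = K - 1
        · subst h
          rw [if_pos ⟨by omega, hC.2⟩, if_pos rfl]
          omega
        · rw [if_neg (fun hh => h (by omega)), if_neg h]
      rw [Finset.sum_congr rfl this, Finset.sum_ite_eq' (Finset.range n) (K-1) (fun _ => K)]
      rw [if_pos (Finset.mem_range.2 hKn)]
    · rw [if_neg hC]
      symm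
      apply Finset.sum_eq_zero
      intro t ht
      apply if_neg
      rintro ⟨h1, h2⟩
      exact hC ⟨by omega, by rwa [show K - 1 = t by omega]⟩
  rw [hmid, ← Finset.sum_add_distrib, ← Finset.sum_add_distrib]
  apply Finset.sum_congr rfl
  intro t ht
  by_cases h1 : Ed e t <;>
    simp only [h1, and_true, and_false] <;>
    split_ifs <;> (try exact absurd ‹False› id) <;> omega

lemma cnt_le (e : Equiv.Perm (Fin n)) (K : ℕ) : cnt e K ≤ n - 1 - K := by
  unfold cnt
  calc ∑ t ∈ Finset.range n, (if K ≤ t ∧ Ed e t then 1 else 0)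
      ≤ ∑ t ∈ Finset.range n, (if K ≤ t ∧ t < n - 1 then 1 else 0) := by
        apply Finset.sum_le_sum
        intro t ht
        split_ifs with h h2 <;> try omega
        · exact absurd ⟨h.1, by have := Ed_lt h.2; omega⟩ h2
    _ = ((Finset.range n).filter (fun t => K ≤ t ∧ t < n - 1)).card := by
        rw [Finset.card_filter]
    _ ≤ (Finset.Ico K (n-1)).card := by
        apply Finset.card_le_card
        intro t ht
        simp only [Finset.mem_filter, Finset.mem_range, Finset.mem_Ico] at ht ⊢
        omega
    _ = n - 1 - K := by rw [Nat.card_Ico]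

lemma cnt_split (e : Equiv.Perm (Fin n)) (K K' : ℕ) (h : K ≤ K') :
    cnt e K = cnt e K' + ∑ t ∈ Finset.range n, (if K ≤ t ∧ t < K' ∧ Ed e t then 1 else 0) := by
  unfold cnt
  rw [← Finset.sum_add_distrib]
  apply Finset.sum_congr rfl
  intro t ht
  by_cases h1 : Ed e t <;>
    simp only [h1, and_true, and_false] <;>
    split_ifs <;> (try exact absurd ‹False› id) <;> omega

lemma cnt_mid_ge (e : Equiv.Perm (Fin n)) (K K' : ℕ) (h : K < K') (hE : Ed e (K'-1)) :
    1 ≤ ∑ t ∈ Finset.range n, (if K ≤ t ∧ t < K' ∧ Ed e t then 1 else 0) := by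
  have hKn : K' - 1 < n := by have := Ed_lt hE; omega
  have := Finset.single_le_sum (f := fun t => if K ≤ t ∧ t < K' ∧ Ed e t then 1 else 0)
    (fun i _ => Nat.zero_le _) (Finset.mem_range.2 hKn)
  rwa [if_pos ⟨by omega, by omega, hE⟩] at this

lemma cnt_mid_le (e : Equiv.Perm (Fin n)) (K K' : ℕ) (hE : ¬ Ed e (K'-1)) :
    ∑ t ∈ Finset.range n, (if K ≤ t ∧ t < K' ∧ Ed e t then 1 else 0) ≤ K' - 1 - K := by
  calc ∑ t ∈ Finset.range n, (if K ≤ t ∧ t < K' ∧ Ed e t then 1 else 0)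
      ≤ ∑ t ∈ Finset.range n, (if K ≤ t ∧ t < K' - 1 then 1 else 0) := by
        apply Finset.sum_le_sum
        intro t ht
        split_ifs with h h2 <;> try omega
        · refine absurd ⟨h.1, ?_⟩ h2
          rcases h with ⟨-, hlt, hEd⟩
          by_cases htt : t = K' - 1
          · exact absurd (htt ▸ hEd) hE
          · omega
    _ = ((Finset.range n).filter (fun t => K ≤ t ∧ t < K' - 1)).card := by
        rw [Finset.card_filter]
    _ ≤ (Finset.Ico K (K'-1)).card := by
        apply Finset.card_le_card
        intro t ht
        simp only [Finset.mem_filter, Finset.mem_range, Finset.mem_Ico] at ht ⊢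
        omega
    _ = K' - 1 - K := by rw [Nat.card_Ico]

lemma star (k : Fin (n+1)) (e : Equiv.Perm (Fin n)) :
    majStat (n+1) (ins k e) + (if 1 ≤ k.1 ∧ Ed e (k.1-1) then k.1 else 0)
      = majStat n e + (if k.1 < n then k.1 + 1 else 0) + cnt e k.1 := by
  rw [maj_ins, maj_e_split e k.1]
  have h3 : (∑ t ∈ Finset.range n, if k.1 ≤ t ∧ Ed e t then t + 2 else 0)
      = (∑ t ∈ Finset.range n, if k.1 ≤ t ∧ Ed e t then t + 1 else 0) + cnt e k.1 := by
    unfold cnt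
    rw [← Finset.sum_add_distrib]
    apply Finset.sum_congr rfl
    intro t ht
    split_ifs <;> omega
  rw [h3]
  ring

lemma maj_ins_lb (k : Fin (n+1)) (e : Equiv.Perm (Fin n)) :
    majStat n e ≤ majStat (n+1) (ins k e) := by
  have hs := star k e
  have hk := k.isLt
  by_cases hF : 1 ≤ k.1 ∧ Ed e (k.1-1)
  · have hlt := Ed_lt hF.2
    rw [if_pos hF] at hs
    split_ifs at hs <;> omega
  · rw [if_neg hF] at hs
    split_ifs at hs <;> omega

lemma maj_ins_ub (k : Fin (n+1)) (e : Equiv.Perm (Fin n)) :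
    majStat (n+1) (ins k e) ≤ majStat n e + n := by
  have hs := star k e
  have hk := k.isLt
  have hc := cnt_le e k.1
  by_cases hF : 1 ≤ k.1 ∧ Ed e (k.1-1)
  · have hlt := Ed_lt hF.2
    rw [if_pos hF] at hs
    split_ifs at hs <;> omega
  · rw [if_neg hF] at hs
    split_ifs at hs <;> omega

lemma maj_ins_ne (k k' : Fin (n+1)) (e : Equiv.Perm (Fin n)) (h : k.1 < k'.1) :
    majStat (n+1) (ins k e) ≠ majStat (n+1) (ins k' e) := by
  have hs := star k e
  have hs' := star k' e
  have hk := k.isLt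
  have hk' := k'.isLt
  have hc := cnt_le e k.1
  have hc' := cnt_le e k'.1
  have hsplit := cnt_split e k.1 k'.1 (le_of_lt h)
  have hk'1 : 1 ≤ k'.1 := by omega
  by_cases hE' : Ed e (k'.1 - 1)
  · have hlt' := Ed_lt hE'
    have hmid := cnt_mid_ge e k.1 k'.1 h hE'
    rw [if_pos ⟨hk'1, hE'⟩] at hs'
    by_cases hF : 1 ≤ k.1 ∧ Ed e (k.1-1)
    · have hlt := Ed_lt hF.2
      rw [if_pos hF] at hs
      split_ifs at hs hs' <;> omega
    · rw [if_neg hF] at hs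
      split_ifs at hs hs' <;> omega
  · have hmid := cnt_mid_le e k.1 k'.1 hE'
    rw [if_neg (fun hh => hE' hh.2)] at hs'
    by_cases hF : 1 ≤ k.1 ∧ Ed e (k.1-1)
    · have hlt := Ed_lt hF.2
      rw [if_pos hF] at hs
      split_ifs at hs hs' <;> omega
    · rw [if_neg hF] at hs
      split_ifs at hs hs' <;> omega

lemma maj_ins_injective (e : Equiv.Perm (Fin n)) :
    Function.Injective (fun k : Fin (n+1) => majStat (n+1) (ins k e)) := by
  intro k k' hkk
  by_contra hne
  rcases Nat.lt_trichotomy k.1 k'.1 with hlt | heq | hgt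
  · exact maj_ins_ne k k' e hlt hkk
  · exact hne (Fin.ext heq)
  · exact maj_ins_ne k' k e hgt hkk.symm

lemma maj_ins_image (e : Equiv.Perm (Fin n)) :
    (Finset.univ : Finset (Fin (n+1))).image (fun k => majStat (n+1) (ins k e))
      = Finset.Icc (majStat n e) (majStat n e + n) := by
  apply Finset.eq_of_subset_of_card_le
  · intro m hm
    rw [Finset.mem_image] at hm
    obtain ⟨k, -, rfl⟩ := hm
    rw [Finset.mem_Icc]
    exact ⟨maj_ins_lb k e, maj_ins_ub k e⟩
  · rw [Nat.card_Icc, Finset.card_image_of_injective _ (maj_ins_injective e)]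
    simp
    omega

lemma sum_maj_ins (e : Equiv.Perm (Fin n)) :
    ∑ k : Fin (n+1), (Polynomial.X : Polynomial ℤ) ^ (majStat (n+1) (ins k e))
      = (∑ i ∈ Finset.range (n+1), (Polynomial.X : Polynomial ℤ) ^ i)
          * (Polynomial.X : Polynomial ℤ) ^ (majStat n e) := by
  have himg := Finset.sum_image (f := fun m : ℕ => (Polynomial.X : Polynomial ℤ) ^ m)
    (s := (Finset.univ : Finset (Fin (n+1))))
    (g := fun k => majStat (n+1) (ins k e))
    (fun x _ y _ hxy => maj_ins_injective e hxy)
  rw [← himg, maj_ins_image e]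
  rw [← Finset.Ico_add_one_right_eq_Icc, Finset.sum_Ico_eq_sum_range]
  rw [Finset.sum_mul]
  have : majStat n e + n + 1 - majStat n e = n + 1 := by omega
  rw [this]
  apply Finset.sum_congr rfl
  intro i hi
  rw [← pow_add]
  congr 1
  omega


lemma sum_inv_ins (e : Equiv.Perm (Fin n)) :
    ∑ k : Fin (n+1), (Polynomial.X : Polynomial ℤ) ^ (invStat (n+1) (ins k e))
      = (∑ i ∈ Finset.range (n+1), (Polynomial.X : Polynomial ℤ) ^ i)
          * (Polynomial.X : Polynomial ℤ) ^ (invStat n e) := by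
  have h1 : ∀ k : Fin (n+1), (Polynomial.X : Polynomial ℤ) ^ (invStat (n+1) (ins k e))
      = (Polynomial.X : Polynomial ℤ) ^ (n - k.1) * (Polynomial.X : Polynomial ℤ) ^ (invStat n e) := by
    intro k
    rw [invStat_ins, pow_add]
  rw [Finset.sum_congr rfl (fun k _ => h1 k), ← Finset.sum_mul]
  congr 1
  rw [Fin.sum_univ_eq_sum_range (fun t => (Polynomial.X : Polynomial ℤ) ^ (n - t)) (n+1)]
  rw [← Finset.sum_range_reflect (fun t => (Polynomial.X : Polynomial ℤ) ^ t) (n+1)]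
  apply Finset.sum_congr rfl
  intro i hi
  rw [Finset.mem_range] at hi
  congr 1 <;> omega

end MajInv

theorem maj_inv_equidistributed (n : ℕ) :
    ∑ σ : Equiv.Perm (Fin n), (Polynomial.X : Polynomial ℤ) ^ majStat n σ =
      ∑ σ : Equiv.Perm (Fin n), (Polynomial.X : Polynomial ℤ) ^ invStat n σ := by
  induction n with
  | zero =>
    apply Finset.sum_congr rfl
    intro σ _
    haveI : IsEmpty (Fin (0 - 1)) := Fin.isEmpty
    have h1 : majStat 0 σ = 0 := by
      rw [majStat, Finset.eq_empty_of_isEmpty (descents 0 σ), Finset.sum_empty]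
    have h2 : invStat 0 σ = 0 := by
      rw [invStat,
        Finset.eq_empty_of_isEmpty
          (Finset.univ.filter fun p : Fin 0 × Fin 0 => p.1 < p.2 ∧ σ p.2 < σ p.1),
        Finset.card_empty]
    rw [h1, h2]
  | succ m ih =>
    have hb := ins_bijective (n := m)
    have hmaj : ∑ σ : Equiv.Perm (Fin (m+1)), (Polynomial.X : Polynomial ℤ) ^ majStat (m+1) σ
        = ∑ p : Fin (m+1) × Equiv.Perm (Fin m),
            (Polynomial.X : Polynomial ℤ) ^ majStat (m+1) (ins p.1 p.2) :=
      (Fintype.sum_bijective _ hb _ _ (fun p => rfl)).symm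
    have hinv : ∑ σ : Equiv.Perm (Fin (m+1)), (Polynomial.X : Polynomial ℤ) ^ invStat (m+1) σ
        = ∑ p : Fin (m+1) × Equiv.Perm (Fin m),
            (Polynomial.X : Polynomial ℤ) ^ invStat (m+1) (ins p.1 p.2) :=
      (Fintype.sum_bijective _ hb _ _ (fun p => rfl)).symm
    rw [hmaj, hinv, Fintype.sum_prod_type, Fintype.sum_prod_type]
    calc ∑ k : Fin (m+1), ∑ e : Equiv.Perm (Fin m),
            (Polynomial.X : Polynomial ℤ) ^ majStat (m+1) (ins k e)
        = ∑ e : Equiv.Perm (Fin m), ∑ k : Fin (m+1),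
            (Polynomial.X : Polynomial ℤ) ^ majStat (m+1) (ins k e) := Finset.sum_comm
      _ = ∑ e : Equiv.Perm (Fin m),
            (∑ i ∈ Finset.range (m+1), (Polynomial.X : Polynomial ℤ) ^ i)
              * (Polynomial.X : Polynomial ℤ) ^ majStat m e := by
          exact Finset.sum_congr rfl (fun e _ => sum_maj_ins e)
      _ = (∑ i ∈ Finset.range (m+1), (Polynomial.X : Polynomial ℤ) ^ i)
            * ∑ e : Equiv.Perm (Fin m), (Polynomial.X : Polynomial ℤ) ^ majStat m e := by
          rw [Finset.mul_sum]
      _ = (∑ i ∈ Finset.range (m+1), (Polynomial.X : Polynomial ℤ) ^ i)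
            * ∑ e : Equiv.Perm (Fin m), (Polynomial.X : Polynomial ℤ) ^ invStat m e := by
          rw [ih]
      _ = ∑ e : Equiv.Perm (Fin m),
            (∑ i ∈ Finset.range (m+1), (Polynomial.X : Polynomial ℤ) ^ i)
              * (Polynomial.X : Polynomial ℤ) ^ invStat m e := by
          rw [Finset.mul_sum]
      _ = ∑ e : Equiv.Perm (Fin m), ∑ k : Fin (m+1),
            (Polynomial.X : Polynomial ℤ) ^ invStat (m+1) (ins k e) := by
          exact Finset.sum_congr rfl (fun e _ => (sum_inv_ins e).symm)
      _ = ∑ k : Fin (m+1), ∑ e : Equiv.Perm (Fin m),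
            (Polynomial.X : Polynomial ℤ) ^ invStat (m+1) (ins k e) := Finset.sum_comm
end

section
/- For every n ≥ 1 and every τ ∈ S_n, ∑_{g∈S_n} m̃aj(g)·m̃aj(g⁻¹τ) = −(n!/2)·m̃aj(τ), where m̃aj(σ) = maj(σ) − n(n−1)/4. In particular, −(2/n!)·m̃aj is an idempotent under convolution in ℚ[S_n]. -/
noncomputable def majC (n : ℕ) (σ : Equiv.Perm (Fin n)) : ℚ :=
  (majStat n σ : ℚ) - n * (n - 1) / 4

noncomputable def desC (n : ℕ) (σ : Equiv.Perm (Fin n)) : ℚ :=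
  (desStat n σ : ℚ) - (n - 1) / 2

noncomputable def invC (n : ℕ) (σ : Equiv.Perm (Fin n)) : ℚ :=
  (invStat n σ : ℚ) - n * (n - 1) / 4

/-!
Let `εᵢ(σ) = ±1` according as the (0-indexed) adjacent positions `i, i+1` form a descent of `σ`;
then `m̃aj = ∑ᵢ (i+1)/2 · εᵢ`, so the claim reduces to the convolutions `∑_g εᵢ(g) εⱼ(g⁻¹τ)`.
Right multiplication by the adjacent transposition `(i i+1)` flips `εᵢ(g)` and, since it only
reorders the values at `i, i+1`, keeps `εⱼ(g⁻¹τ)` — unless `g` maps `{i, i+1}` onto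
`{τ j, τ (j+1)}`. Only those `2 (n-2)!` permutations survive, each contributing `-εⱼ(τ)`.
Summing against the weights, whose total is `n(n-1)/4`, gives `-(n!/2) m̃aj(τ)`.
-/

open Finset Equiv

section PairCount

variable {α : Type*} [Fintype α] [DecidableEq α]

lemma card_perm_apply_pair_congr {x y a b a' b' : α} (hab : a ≠ b) (hab' : a' ≠ b') :
    #{g : Perm α | g x = a ∧ g y = b} = #{g : Perm α | g x = a' ∧ g y = b'} := by
  obtain ⟨π, hπ⟩ := Perm.exists_extending_pair ![a, b] ![a', b']
    (by simpa [Function.Injective, Fin.forall_fin_two] using ⟨hab, hab.symm⟩)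
    (by simpa [Function.Injective, Fin.forall_fin_two] using ⟨hab', hab'.symm⟩)
  have hπa : π a = a' := hπ 0
  have hπb : π b = b' := hπ 1
  refine card_equiv (Equiv.mulLeft π) fun g => ?_
  simp only [mem_filter, mem_univ, true_and, coe_mulLeft, Perm.mul_apply, ← hπa, ← hπb,
    π.injective.eq_iff]

lemma card_perm_apply_pair_mul {x y a b : α} (hxy : x ≠ y) (hab : a ≠ b) :
    #{g : Perm α | g x = a ∧ g y = b} * (Fintype.card α * (Fintype.card α - 1)) =
      (Fintype.card α).factorial := by
  have hfib := card_eq_sum_card_fiberwise (s := univ) (t := (univ : Finset α).offDiag)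
    (f := fun g : Perm α => (g x, g y)) fun g _ => by simpa using g.injective.ne hxy
  rw [card_univ, Fintype.card_perm] at hfib
  rw [hfib, sum_congr rfl fun p hp => ?_, sum_const, smul_eq_mul, offDiag_card, card_univ,
    ← Nat.mul_sub_one, mul_comm]
  rw [mem_offDiag] at hp
  simpa only [Prod.ext_iff] using card_perm_apply_pair_congr hp.2.2 hab

end PairCount

section PairSign

variable {α : Type*} [LinearOrder α] {x y u v : α}

def pairSign (x y : α) (g : Perm α) : ℚ := if g y < g x then 1 else -1

lemma pairSign_of_apply_eq {g : Perm α} (hu : g x = u) (hv : g y = v) :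
    pairSign x y g = if v < u then 1 else -1 := by
  rw [pairSign, hu, hv]

lemma pairSign_mul_swap (hxy : x ≠ y) (g : Perm α) :
    pairSign x y (g * swap x y) = -pairSign x y g := by
  have hne : g x ≠ g y := g.injective.ne hxy
  simp only [pairSign, Perm.mul_apply, swap_apply_left, swap_apply_right]
  rcases hne.lt_or_gt with h | h <;> simp [h, h.not_gt]

lemma swap_apply_lt_swap_apply_iff (hxy : x ⋖ y) (h₁ : ¬(u = x ∧ v = y))
    (h₂ : ¬(u = y ∧ v = x)) : swap x y u < swap x y v ↔ u < v := by
  have hx : ∀ w, w ≠ y → (x < w ↔ y < w) := fun w hw =>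
    ⟨fun h => (hxy.ge_of_gt h).lt_of_ne' hw, hxy.lt.trans⟩
  have hy : ∀ w, w ≠ x → (w < y ↔ w < x) := fun w hw =>
    ⟨fun h => (hxy.le_of_lt h).lt_of_ne hw, (·.trans hxy.lt)⟩
  rcases eq_or_ne u x with hux | hux <;> rcases eq_or_ne u y with huy | huy <;>
    rcases eq_or_ne v x with hvx | hvx <;> rcases eq_or_ne v y with hvy | hvy <;>
    simp_all [swap_apply_of_ne_of_ne]

lemma pairSign_swap_mul (hxy : x ⋖ y) {h : Perm α}
    (h₁ : ¬(h u = x ∧ h v = y)) (h₂ : ¬(h u = y ∧ h v = x)) :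
    pairSign u v (swap x y * h) = pairSign u v h := by
  simp only [pairSign, Perm.mul_apply,
    swap_apply_lt_swap_apply_iff hxy (fun h => h₂ h.symm) (fun h => h₁ h.symm)]

lemma pairSign_mul_pairSign_inv_mul_of_pair {g τ : Perm α} (hxy : x < y) (huv : u ≠ v)
    (hg : (g x = τ u ∧ g y = τ v) ∨ (g x = τ v ∧ g y = τ u)) :
    pairSign x y g * pairSign u v (g⁻¹ * τ) = -pairSign u v τ := by
  have hτ : τ u ≠ τ v := τ.injective.ne huv
  rcases hg with ⟨hx, hy⟩ | ⟨hx, hy⟩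
  · have hu : (g⁻¹ * τ) u = x := by rw [Perm.mul_apply, ← hx, Perm.inv_eq_iff_eq]
    have hv : (g⁻¹ * τ) v = y := by rw [Perm.mul_apply, ← hy, Perm.inv_eq_iff_eq]
    rw [pairSign_of_apply_eq hx hy, pairSign_of_apply_eq hu hv, pairSign_of_apply_eq rfl rfl,
      if_neg hxy.not_gt]
    ring
  · have hu : (g⁻¹ * τ) u = y := by rw [Perm.mul_apply, ← hy, Perm.inv_eq_iff_eq]
    have hv : (g⁻¹ * τ) v = x := by rw [Perm.mul_apply, ← hx, Perm.inv_eq_iff_eq]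
    rw [pairSign_of_apply_eq hx hy, pairSign_of_apply_eq hu hv, pairSign_of_apply_eq rfl rfl,
      if_pos hxy]
    rcases hτ.lt_or_gt with h | h <;> simp [h, h.not_gt]

lemma pairSign_mul_pairSign_inv_mul_mul_swap {g τ : Perm α} (hxy : x ⋖ y)
    (hg : ¬((g x = τ u ∧ g y = τ v) ∨ (g x = τ v ∧ g y = τ u))) :
    pairSign x y (g * swap x y) * pairSign u v ((g * swap x y)⁻¹ * τ) =
      -(pairSign x y g * pairSign u v (g⁻¹ * τ)) := by
  have hinv : (g * swap x y)⁻¹ * τ = swap x y * (g⁻¹ * τ) := by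
    rw [mul_inv_rev, swap_inv, mul_assoc]
  have h₁ : ¬((g⁻¹ * τ) u = x ∧ (g⁻¹ * τ) v = y) := by
    simp only [Perm.mul_apply, Perm.inv_eq_iff_eq]
    exact fun ⟨hu, hv⟩ => hg (.inl ⟨hu.symm, hv.symm⟩)
  have h₂ : ¬((g⁻¹ * τ) u = y ∧ (g⁻¹ * τ) v = x) := by
    simp only [Perm.mul_apply, Perm.inv_eq_iff_eq]
    exact fun ⟨hu, hv⟩ => hg (.inr ⟨hv.symm, hu.symm⟩)
  rw [hinv, pairSign_swap_mul hxy h₁ h₂, pairSign_mul_swap hxy.lt.ne, neg_mul]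

theorem sum_pairSign_mul_pairSign_inv_mul [Fintype α] (hxy : x ⋖ y) (huv : u ≠ v) (τ : Perm α) :
    ∑ g, pairSign x y g * pairSign u v (g⁻¹ * τ) =
      -((#{g : Perm α | g x = τ u ∧ g y = τ v} + #{g : Perm α | g x = τ v ∧ g y = τ u} : ℕ) : ℚ) *
        pairSign u v τ := by
  set F : Perm α → ℚ := fun g => pairSign x y g * pairSign u v (g⁻¹ * τ)
  set E : Perm α → Prop := fun g => (g x = τ u ∧ g y = τ v) ∨ (g x = τ v ∧ g y = τ u)
  have hpair : ∀ g, F g + F (g * swap x y) = if E g then -2 * pairSign u v τ else 0 := by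
    intro g
    by_cases hg : E g
    · have hg' : E (g * swap x y) := by
        simp only [E, Perm.mul_apply, swap_apply_left, swap_apply_right]
        tauto
      simp only [F]
      rw [if_pos hg, pairSign_mul_pairSign_inv_mul_of_pair hxy.lt huv hg,
        pairSign_mul_pairSign_inv_mul_of_pair hxy.lt huv hg']
      ring
    · simp only [F]
      rw [if_neg hg, pairSign_mul_pairSign_inv_mul_mul_swap hxy hg]
      ring
  have hdouble : 2 * ∑ g, F g = ∑ g, (F g + F (g * swap x y)) := by
    have hshift : ∑ g, F (g * swap x y) = ∑ g, F g :=
      Fintype.sum_equiv (Equiv.mulRight (swap x y)) _ _ fun _ => rfl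
    rw [sum_add_distrib, hshift]
    ring
  have hcard : #{g : Perm α | E g} =
      #{g : Perm α | g x = τ u ∧ g y = τ v} + #{g : Perm α | g x = τ v ∧ g y = τ u} := by
    rw [filter_or, card_union_of_disjoint (disjoint_filter.mpr fun g _ h h' => ?_)]
    exact τ.injective.ne huv (h.1.symm.trans h'.1)
  rw [sum_congr rfl fun g _ => hpair g, sum_ite, sum_const_zero, add_zero, sum_const,
    nsmul_eq_mul, hcard] at hdouble
  linarith

end PairSign

section Descents

variable {n : ℕ}

def gapLeft (i : Fin (n - 1)) : Fin n := ⟨i, by omega⟩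

def gapRight (i : Fin (n - 1)) : Fin n := ⟨i + 1, by omega⟩

lemma gapLeft_covBy_gapRight (i : Fin (n - 1)) : gapLeft i ⋖ gapRight i := by
  simp [Fin.covBy_iff, gapLeft, gapRight]

lemma mem_descents_iff {σ : Perm (Fin n)} {i : Fin (n - 1)} :
    i ∈ descents n σ ↔ σ (gapRight i) < σ (gapLeft i) := by
  simp [descents, gapLeft, gapRight]

def descentSign (i : Fin (n - 1)) : Perm (Fin n) → ℚ := pairSign (gapLeft i) (gapRight i)

lemma sum_val_add_one_div_two (n : ℕ) : ∑ i : Fin (n - 1), ((i : ℚ) + 1) / 2 = n * (n - 1) / 4 := by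
  have hrange : ∀ m : ℕ, ∑ i ∈ range m, ((i : ℚ) + 1) / 2 = m * (m + 1) / 4 := by
    intro m
    induction m with
    | zero => simp
    | succ m ih => rw [sum_range_succ, ih]; push_cast; ring
  rw [Fin.sum_univ_eq_sum_range (fun i => ((i : ℚ) + 1) / 2), hrange]
  rcases n with _ | n
  · simp
  · push_cast [Nat.add_sub_cancel]; ring

lemma majC_eq_sum_descentSign (σ : Perm (Fin n)) :
    majC n σ = ∑ i : Fin (n - 1), ((i : ℚ) + 1) / 2 * descentSign i σ := by
  have hsign : ∀ i : Fin (n - 1), ((i : ℚ) + 1) / 2 * descentSign i σ =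
      (if i ∈ descents n σ then (i : ℚ) + 1 else 0) - ((i : ℚ) + 1) / 2 := by
    intro i
    by_cases h : σ (gapRight i) < σ (gapLeft i) <;>
      simp [descentSign, pairSign, mem_descents_iff, h]
    ring
  rw [sum_congr rfl fun i _ => hsign i, sum_sub_distrib, ← sum_filter, sum_val_add_one_div_two,
    majC, majStat]
  simp

lemma majC_eq_zero_of_le_one (hn : n ≤ 1) (σ : Perm (Fin n)) : majC n σ = 0 := by
  rw [majC_eq_sum_descentSign]
  exact sum_eq_zero fun i _ => absurd i.isLt (by omega)

lemma sum_descentSign_mul_descentSign_inv_mul (i j : Fin (n - 1)) (τ : Perm (Fin n)) :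
    ∑ g, descentSign i g * descentSign j (g⁻¹ * τ) =
      -(2 * n.factorial / (n * (n - 1))) * descentSign j τ := by
  have hij : gapLeft j ≠ gapRight j := (gapLeft_covBy_gapRight j).lt.ne
  have hτ : τ (gapLeft j) ≠ τ (gapRight j) := τ.injective.ne hij
  have hx := (gapLeft_covBy_gapRight i).lt.ne
  have h₁ := card_perm_apply_pair_mul hx hτ
  have h₂ := card_perm_apply_pair_mul hx hτ.symm
  simp only [Fintype.card_fin] at h₁ h₂
  have hn : 2 ≤ n := by have := i.isLt; omega
  have hpos : (n : ℚ) * (n - 1) ≠ 0 := by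
    have : (2 : ℚ) ≤ n := by exact_mod_cast hn
    exact mul_ne_zero (by positivity) (by linarith)
  have hcast : ((n * (n - 1) : ℕ) : ℚ) = n * (n - 1) := by
    push_cast [Nat.cast_sub (by omega : 1 ≤ n)]; ring
  rw [descentSign, descentSign, sum_pairSign_mul_pairSign_inv_mul (gapLeft_covBy_gapRight i) hij]
  congr 2
  rw [eq_div_iff hpos, ← hcast]
  norm_cast
  rw [add_mul, h₁, h₂, two_mul]

end Descents

lemma sum_majC_mul_majC_inv_mul {n : ℕ} (hn : 2 ≤ n) (τ : Perm (Fin n)) :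
    ∑ g, majC n g * majC n (g⁻¹ * τ) = -(n.factorial / 2) * majC n τ := by
  calc ∑ g, majC n g * majC n (g⁻¹ * τ)
      = ∑ i : Fin (n - 1), ∑ j : Fin (n - 1), ((i : ℚ) + 1) / 2 * (((j : ℚ) + 1) / 2) *
          ∑ g, descentSign i g * descentSign j (g⁻¹ * τ) := by
        simp only [majC_eq_sum_descentSign, sum_mul_sum]
        simp only [mul_sum]
        rw [sum_comm]
        refine sum_congr rfl fun i _ => ?_
        rw [sum_comm]
        exact sum_congr rfl fun j _ => sum_congr rfl fun g _ => by ring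
    _ = -(2 * n.factorial / (n * (n - 1))) * ((∑ i : Fin (n - 1), ((i : ℚ) + 1) / 2) *
          ∑ j : Fin (n - 1), ((j : ℚ) + 1) / 2 * descentSign j τ) := by
        simp only [sum_descentSign_mul_descentSign_inv_mul, sum_mul_sum]
        simp only [mul_sum]
        exact sum_congr rfl fun i _ => sum_congr rfl fun j _ => by ring
    _ = -(n.factorial / 2) * majC n τ := by
        rw [sum_val_add_one_div_two, ← majC_eq_sum_descentSign]
        have : (2 : ℚ) ≤ n := by exact_mod_cast hn
        have : (n : ℚ) - 1 ≠ 0 := by linarith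
        field_simp
        ring

theorem maj_conv_maj_general (n : ℕ) :
    (∀ τ : Equiv.Perm (Fin n),
      ∑ g : Equiv.Perm (Fin n), majC n g * majC n (g⁻¹ * τ) =
        -((n.factorial : ℚ) / 2) * majC n τ) ∧
    (∀ τ : Equiv.Perm (Fin n),
      ∑ g : Equiv.Perm (Fin n),
          (-(2 / (n.factorial : ℚ)) * majC n g) * (-(2 / (n.factorial : ℚ)) * majC n (g⁻¹ * τ)) =
        -(2 / (n.factorial : ℚ)) * majC n τ) := by
  have hconv : ∀ τ : Perm (Fin n),
      ∑ g, majC n g * majC n (g⁻¹ * τ) = -((n.factorial : ℚ) / 2) * majC n τ := by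
    intro τ
    rcases le_or_gt n 1 with hn | hn
    · simp [majC_eq_zero_of_le_one hn]
    · exact sum_majC_mul_majC_inv_mul hn τ
  refine ⟨hconv, fun τ => ?_⟩
  have hfac : (n.factorial : ℚ) ≠ 0 := by positivity
  rw [sum_congr rfl fun g _ => mul_mul_mul_comm _ _ _ _, ← mul_sum, hconv]
  field_simp

theorem maj_conv_maj (n : ℕ) (hn : 1 ≤ n) :
    (∀ τ : Equiv.Perm (Fin n),
      ∑ g : Equiv.Perm (Fin n), majC n g * majC n (g⁻¹ * τ) =
        -((n.factorial : ℚ) / 2) * majC n τ) ∧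
    (∀ τ : Equiv.Perm (Fin n),
      ∑ g : Equiv.Perm (Fin n),
          (-(2 / (n.factorial : ℚ)) * majC n g) * (-(2 / (n.factorial : ℚ)) * majC n (g⁻¹ * τ)) =
        -(2 / (n.factorial : ℚ)) * majC n τ) :=
  maj_conv_maj_general n
end

section
/- The function inv on S_n is conditionally negative semidefinite: for any complex numbers (x_σ)_{σ∈S_n} with ∑_σ x_σ = 0, one has ∑_{g,h∈S_n} inv(g⁻¹h)·x_g·conj(x_h) ≤ 0 (the left-hand side is real). -/
/-!
`precedes (a, b) σ ∈ {0, 1}` records whether the letter `a` comes before `b` in the one-line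
word of `σ`, i.e. whether `σ⁻¹ a < σ⁻¹ b`; write `f_{ab}` for it. Substituting
`(i, j) = (h⁻¹ a, h⁻¹ b)`, `inv(g⁻¹h)` counts the ordered pairs `(a, b)` with `a` before `b`
in `h` but after `b` in `g`, so `inv(g⁻¹h) = ∑_{(a,b)} (1 - f_{ab}(g)) f_{ab}(h)` (the
diagonal `a = b` contributes `0`). Each kernel `(1 - f g) f h` with `f` real is conditionally
negative: when `∑ x = 0` its quadratic form factors as `(∑ (1 - f) x) · conj (∑ f x) = -|∑ f x|²`.
-/

open Finset ComplexOrder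

open scoped ComplexConjugate

section ConditionallyNegative

variable {ι : Type*} [Fintype ι]

theorem sum_sum_one_sub_mul_mul_mul_conj (f : ι → ℝ) {x : ι → ℂ} (hx : ∑ i, x i = 0) :
    ∑ i, ∑ j, (((1 - f i) * f j : ℝ) : ℂ) * x i * conj (x j) =
      -(Complex.normSq (∑ i, (f i : ℂ) * x i) : ℂ) := by
  have hleft : ∑ i, (1 - (f i : ℂ)) * x i = -∑ i, (f i : ℂ) * x i := by
    simp only [sub_mul, one_mul, sum_sub_distrib, hx, zero_sub]
  have hright : ∑ j, (f j : ℂ) * conj (x j) = conj (∑ j, (f j : ℂ) * x j) := by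
    simp only [map_sum, map_mul, Complex.conj_ofReal]
  calc ∑ i, ∑ j, (((1 - f i) * f j : ℝ) : ℂ) * x i * conj (x j)
      = (∑ i, (1 - (f i : ℂ)) * x i) * ∑ j, (f j : ℂ) * conj (x j) := by
        rw [sum_mul_sum]
        exact sum_congr rfl fun i _ => sum_congr rfl fun j _ => by push_cast; ring
    _ = -(Complex.normSq (∑ i, (f i : ℂ) * x i) : ℂ) := by
        rw [hleft, hright, neg_mul, Complex.mul_conj]

theorem sum_sum_one_sub_mul_mul_mul_conj_nonpos (f : ι → ℝ) {x : ι → ℂ}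
    (hx : ∑ i, x i = 0) :
    ∑ i, ∑ j, (((1 - f i) * f j : ℝ) : ℂ) * x i * conj (x j) ≤ 0 := by
  rw [sum_sum_one_sub_mul_mul_mul_conj f hx, neg_nonpos]
  exact_mod_cast Complex.normSq_nonneg _

end ConditionallyNegative

section Inversions

variable {n : ℕ}

noncomputable def precedes (p : Fin n × Fin n) (σ : Equiv.Perm (Fin n)) : ℝ :=
  if σ⁻¹ p.1 < σ⁻¹ p.2 then 1 else 0

theorem invStat_inv_mul_eq_card (g h : Equiv.Perm (Fin n)) :
    invStat n (g⁻¹ * h) =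
      #{p : Fin n × Fin n | h⁻¹ p.1 < h⁻¹ p.2 ∧ g⁻¹ p.2 < g⁻¹ p.1} := by
  unfold invStat
  exact card_equiv (h.prodCongr h) fun p => by
    rw [mem_filter, mem_filter]
    simp

theorem one_sub_precedes_mul_precedes (p : Fin n × Fin n) (g h : Equiv.Perm (Fin n)) :
    (1 - precedes p g) * precedes p h =
      if h⁻¹ p.1 < h⁻¹ p.2 ∧ g⁻¹ p.2 < g⁻¹ p.1 then 1 else 0 := by
  unfold precedes
  by_cases hh : h⁻¹ p.1 < h⁻¹ p.2
  · have hg : g⁻¹ p.1 ≠ g⁻¹ p.2 := fun e => hh.ne (congrArg _ (g⁻¹.injective e))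
    rcases hg.lt_or_gt with hg | hg
    · simp only [hh, hg, hg.not_gt, if_true, if_false, and_false, sub_self, zero_mul]
    · simp only [hh, hg, hg.not_gt, if_true, if_false, and_true, sub_zero, mul_one]
  · simp only [hh, if_false, false_and, mul_zero]

theorem invStat_inv_mul_eq_sum (g h : Equiv.Perm (Fin n)) :
    (invStat n (g⁻¹ * h) : ℝ) = ∑ p, (1 - precedes p g) * precedes p h := by
  rw [invStat_inv_mul_eq_card, card_filter]
  push_cast
  exact sum_congr rfl fun p _ => (one_sub_precedes_mul_precedes p g h).symm

end Inversions

open ComplexOrder in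
theorem inv_conditionally_negative (n : ℕ) (x : Equiv.Perm (Fin n) → ℂ)
    (hx : ∑ σ : Equiv.Perm (Fin n), x σ = 0) :
    ∑ g : Equiv.Perm (Fin n), ∑ h : Equiv.Perm (Fin n),
        (invStat n (g⁻¹ * h) : ℂ) * x g * (starRingEnd ℂ) (x h) ≤ 0 := by
  simp_rw [← Complex.ofReal_natCast, invStat_inv_mul_eq_sum, Complex.ofReal_sum, sum_mul]
  conv_lhs => enter [2, g]; rw [sum_comm]
  rw [sum_comm]
  exact sum_nonpos fun p _ => sum_sum_one_sub_mul_mul_mul_conj_nonpos (precedes p) hx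
end

section
/- Let M be the space of real skew-symmetric n×n matrices with inner product ⟨A,B⟩ = (1/2)Tr(AB^T) (equivalently ∑_{i<j} a_{ij}b_{ij}), and let S_n act on M by ϱ(σ)A = P_σ A P_σ^T where P_σ is the permutation matrix of σ. Let h_inv be the skew-symmetric matrix with (h_inv)_{ij} = 1 for i<j. Then for every σ ∈ S_n, inv(σ) = n(n−1)/4 − (1/2)⟨ϱ(σ)h_inv, h_inv⟩. -/
/-- Inner product on skew-symmetric matrices: `∑_{i<j} a_{ij} b_{ij}`. -/
def skewInner (n : ℕ) (A B : Matrix (Fin n) (Fin n) ℝ) : ℝ :=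
  ∑ p ∈ Finset.univ.filter (fun p : Fin n × Fin n => p.1 < p.2), A p.1 p.2 * B p.1 p.2

/-- Action of `S_n` on matrices by simultaneous row and column permutation. -/
def rho (n : ℕ) (σ : Equiv.Perm (Fin n)) (A : Matrix (Fin n) (Fin n) ℝ) :
    Matrix (Fin n) (Fin n) ℝ :=
  fun i j => A (σ⁻¹ i) (σ⁻¹ j)

/-- The skew-symmetric matrix with `1` at every entry above the diagonal. -/
def hInv (n : ℕ) : Matrix (Fin n) (Fin n) ℝ :=
  fun i j => if i < j then 1 else if j < i then -1 else 0

/-! The pair `i < j` contributes `hInv (σ⁻¹ i) (σ⁻¹ j) = ±1` to `⟨ϱ(σ) hInv, hInv⟩`, with `-1`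
exactly when `(i, j)` is an inversion of `σ⁻¹`. Hence the inner product is
`n(n-1)/2 - 2 inv(σ⁻¹)`, and `inv(σ⁻¹) = inv(σ)`. -/

open Finset

lemma hInv_of_lt {n : ℕ} {i j : Fin n} (h : i < j) : hInv n i j = 1 := if_pos h

lemma hInv_of_ne {n : ℕ} {i j : Fin n} (h : i ≠ j) :
    hInv n i j = 1 - 2 * if j < i then 1 else 0 := by
  rcases h.lt_or_gt with hlt | hgt
  · simp [hInv, hlt, hlt.not_gt]
  · norm_num [hInv, hgt, hgt.not_gt]

lemma invStat_inv (n : ℕ) (σ : Equiv.Perm (Fin n)) : invStat n σ⁻¹ = invStat n σ := by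
  refine card_equiv ((Equiv.prodComm _ _).trans (σ⁻¹.prodCongr σ⁻¹)) fun p => ?_
  simp [and_comm]

lemma skewInner_rho_hInv (n : ℕ) (σ : Equiv.Perm (Fin n)) :
    skewInner n (rho n σ (hInv n)) (hInv n) =
      #{p : Fin n × Fin n | p.1 < p.2} - 2 * (invStat n σ : ℝ) := by
  have hterm : ∀ p ∈ ({p : Fin n × Fin n | p.1 < p.2} : Finset _),
      rho n σ (hInv n) p.1 p.2 * hInv n p.1 p.2 =
        1 - 2 * if σ⁻¹ p.2 < σ⁻¹ p.1 then 1 else 0 := fun p hp => by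
    have hlt : p.1 < p.2 := (mem_filter.mp hp).2
    rw [hInv_of_lt hlt, mul_one, rho, hInv_of_ne (σ⁻¹.injective.ne hlt.ne)]
  rw [skewInner, sum_congr rfl hterm, sum_sub_distrib, ← mul_sum, sum_boole, filter_filter,
    ← invStat_inv n σ, invStat]
  simp

theorem inv_matrix_formula (n : ℕ) (σ : Equiv.Perm (Fin n)) :
    (invStat n σ : ℝ) =
      (n : ℝ) * (n - 1) / 4 - (1 / 2) * skewInner n (rho n σ (hInv n)) (hInv n) := by
  rw [skewInner_rho_hInv, Fintype.card_product_filter_lt, Nat.cast_choose_two, Fintype.card_fin]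
  ring
end
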